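/- (Asymptotic lower bound on the left-tail probability, complex central case.) Let N be a positive integer and λ_1, …, λ_N positive reals, and let W_1, …, W_N be i.i.d. exponential random variables with rate 1. Then liminf_{γ_0 → 0⁺} P( Σ_{i=1}^N λ_i W_i ≤ γ_0 ) / γ_0^{N} ≥ 1 / ( N^N · Π_{i=1}^N λ_i ). -/

import Mathlib

/-!
Put `cᵢ = 1 / (N λᵢ)`. For `γ > 0` the box `∏ᵢ (-∞, γ cᵢ]` lies inside `{∑ λᵢ wᵢ ≤ γ}`, so the
probability is at least `∏ᵢ (1 - e^{-γ cᵢ})`; divided by `γ^N` this tends to `∏ᵢ cᵢ`, the claimed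
bound. A real `liminf` is junk unless the function is eventually bounded above; since the
`Wᵢ` are a.s. nonnegative, `{∑ λᵢ wᵢ ≤ γ}` is a.s. inside the box `∏ᵢ (-∞, γ / λᵢ]`, whence the
ratio is at most `1 / ∏ λᵢ`.
-/

open MeasureTheory ProbabilityTheory Filter Set Real Topology

namespace ProbabilityTheory

lemma ae_nonneg_expMeasure (r : ℝ) : ∀ᵐ x ∂expMeasure r, 0 ≤ x := by
  refine (ae_withDensity_iff (measurable_gammaPDFReal 1 r).ennreal_ofReal).2 ?_
  exact Eventually.of_forall fun x hx => not_lt.1 fun hneg => hx (gammaPDF_of_neg hneg)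

lemma expMeasure_real_Iic {r x : ℝ} (hr : 0 < r) (hx : 0 ≤ x) :
    (expMeasure r).real (Iic x) = 1 - exp (-(r * x)) := by
  have := isProbabilityMeasure_expMeasure hr
  rw [← cdf_eq_real, cdf_expMeasure_eq hr, if_pos hx]

lemma expMeasure_real_Iic_le {r x : ℝ} (hr : 0 < r) (hx : 0 ≤ x) :
    (expMeasure r).real (Iic x) ≤ r * x := by
  rw [expMeasure_real_Iic hr hx]
  linarith [one_sub_le_exp_neg (r * x)]

end ProbabilityTheory

lemma MeasureTheory.Measure.real_pi_pi {ι : Type*} [Fintype ι] {α : ι → Type*}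
    [∀ i, MeasurableSpace (α i)] (μ : ∀ i, Measure (α i)) [∀ i, SigmaFinite (μ i)]
    (s : ∀ i, Set (α i)) :
    (Measure.pi μ).real (univ.pi s) = ∏ i, (μ i).real (s i) := by
  simp only [measureReal_def, Measure.pi_pi, ENNReal.toReal_prod]

lemma tendsto_one_sub_exp_neg_mul_div (c : ℝ) :
    Tendsto (fun γ => (1 - exp (-(c * γ))) / γ) (𝓝[>] 0) (𝓝 c) := by
  have hderiv : HasDerivAt (fun γ => 1 - exp (-(c * γ))) c 0 := by
    simpa [sub_eq_add_neg] using (hasDerivAt_neg_exp_mul_exp (r := c) (x := 0)).const_add 1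
  refine (hderiv.tendsto_slope.mono_left (nhdsWithin_mono 0 fun x hx => ne_of_gt hx)).congr ?_
  intro γ
  simp [slope_def_field]

lemma Filter.Tendsto.le_liminf_of_le_of_le {α : Type*} {l : Filter α} [l.NeBot]
    {f g : α → ℝ} {L B : ℝ} (hg : Tendsto g l (𝓝 L)) (hgf : g ≤ᶠ[l] f)
    (hfB : ∀ᶠ x in l, f x ≤ B) : L ≤ liminf f l :=
  hg.liminf_eq ▸ liminf_le_liminf hgf hg.isBoundedUnder_ge
    (isCoboundedUnder_ge_of_eventually_le l hfB)

section WeightedSum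

variable {ι : Type*} [Fintype ι]

lemma sum_mul_inv_card_mul_mul_le {lam : ι → ℝ} (hlam : ∀ i, lam i ≠ 0) {γ : ℝ}
    (hγ : 0 ≤ γ) : ∑ i, lam i * ((Fintype.card ι * lam i)⁻¹ * γ) ≤ γ := by
  rcases isEmpty_or_nonempty ι with _ | _
  · simpa using hγ
  · have hcard : (Fintype.card ι : ℝ) ≠ 0 := Nat.cast_ne_zero.2 Fintype.card_ne_zero
    have hterm : ∀ i, lam i * ((Fintype.card ι * lam i)⁻¹ * γ) = γ / Fintype.card ι :=
      fun i => by field_simp [hlam i]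
    rw [Finset.sum_congr rfl fun i _ => hterm i, Finset.sum_const, Finset.card_univ,
      nsmul_eq_mul, mul_div_cancel₀ _ hcard]

lemma pi_Iic_subset_setOf_sum_mul_le {lam a : ι → ℝ} {γ : ℝ} (hlam : ∀ i, 0 ≤ lam i)
    (ha : ∑ i, lam i * a i ≤ γ) :
    univ.pi (fun i => Iic (a i)) ⊆ {w | ∑ i, lam i * w i ≤ γ} := fun _ hw =>
  le_trans (Finset.sum_le_sum fun i _ => mul_le_mul_of_nonneg_left (hw i trivial) (hlam i)) ha

lemma mem_pi_Iic_div_of_sum_mul_le {lam w : ι → ℝ} {γ : ℝ} (hlam : ∀ i, 0 < lam i)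
    (hw : ∀ i, 0 ≤ w i) (hsum : ∑ i, lam i * w i ≤ γ) :
    w ∈ univ.pi (fun i => Iic (γ / lam i)) := fun j _ => by
  rw [mem_Iic, le_div_iff₀' (hlam j)]
  exact (Finset.single_le_sum (fun i _ => mul_nonneg (hlam i).le (hw i))
    (Finset.mem_univ j)).trans hsum

lemma prod_one_sub_exp_le_expMeasure_pi_real {r : ℝ} (hr : 0 < r) {lam a : ι → ℝ}
    (hlam : ∀ i, 0 ≤ lam i) (ha : ∀ i, 0 ≤ a i) {γ : ℝ} (hsum : ∑ i, lam i * a i ≤ γ) :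
    ∏ i, (1 - exp (-(r * a i))) ≤
      (Measure.pi fun _ : ι => expMeasure r).real {w | ∑ i, lam i * w i ≤ γ} := by
  have := isProbabilityMeasure_expMeasure hr
  calc ∏ i, (1 - exp (-(r * a i)))
      = (Measure.pi fun _ : ι => expMeasure r).real (univ.pi fun i => Iic (a i)) := by
        rw [Measure.real_pi_pi]
        exact Finset.prod_congr rfl fun i _ => (expMeasure_real_Iic hr (ha i)).symm
    _ ≤ _ := measureReal_mono (pi_Iic_subset_setOf_sum_mul_le hlam hsum)

lemma expMeasure_pi_real_le_prod {r : ℝ} (hr : 0 < r) {lam : ι → ℝ} (hlam : ∀ i, 0 < lam i)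
    {γ : ℝ} (hγ : 0 ≤ γ) :
    (Measure.pi fun _ : ι => expMeasure r).real {w | ∑ i, lam i * w i ≤ γ} ≤
      ∏ i, r * (γ / lam i) := by
  have := isProbabilityMeasure_expMeasure hr
  have hnonneg : ∀ᵐ w ∂Measure.pi fun _ : ι => expMeasure r, ∀ i, 0 ≤ w i :=
    eventually_all.2 fun _ => Measure.tendsto_eval_ae_ae.eventually (ae_nonneg_expMeasure r)
  calc _ ≤ (Measure.pi fun _ : ι => expMeasure r).real (univ.pi fun i => Iic (γ / lam i)) :=
        ENNReal.toReal_mono (measure_ne_top _ _) <| measure_mono_ae <|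
          hnonneg.mono fun _ hw hsum => mem_pi_Iic_div_of_sum_mul_le hlam hw hsum
    _ ≤ _ := by
        rw [Measure.real_pi_pi]
        exact Finset.prod_le_prod (fun _ _ => measureReal_nonneg)
          fun i _ => expMeasure_real_Iic_le hr (div_nonneg hγ (hlam i).le)

end WeightedSum

theorem left_tail_liminf_lower_bound_exponential_general
    (N : ℕ) (lam : Fin N → ℝ) (hlam : ∀ i, 0 < lam i) :
    Filter.liminf
      (fun γ₀ : ℝ =>
        ((Measure.pi fun _ : Fin N => expMeasure 1)
            {w : Fin N → ℝ | ∑ i, lam i * w i ≤ γ₀}).toReal / γ₀ ^ N)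
      (nhdsWithin 0 (Set.Ioi 0))
      ≥ 1 / ((N : ℝ) ^ N * ∏ i, lam i) := by
  set c : Fin N → ℝ := fun i => (N * lam i)⁻¹
  have hlim : Tendsto (fun γ => ∏ i, (1 - exp (-(c i * γ))) / γ) (𝓝[>] 0)
      (𝓝 (1 / ((N : ℝ) ^ N * ∏ i, lam i))) := by
    convert tendsto_finsetProd Finset.univ fun i _ => tendsto_one_sub_exp_neg_mul_div (c i)
      using 2
    simp [c, Finset.prod_mul_distrib]
  refine ge_iff_le.2 (hlim.le_liminf_of_le_of_le (B := 1 / ∏ i, lam i) ?_ ?_)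
  · filter_upwards [self_mem_nhdsWithin] with γ (hγ : 0 < γ)
    have hbox : ∑ i, lam i * (c i * γ) ≤ γ := by
      simpa only [c, Fintype.card_fin] using
        sum_mul_inv_card_mul_mul_le (fun i => (hlam i).ne') hγ.le
    have hc : ∀ i, 0 ≤ c i := fun i => inv_nonneg.2 (mul_nonneg N.cast_nonneg (hlam i).le)
    have hlower := prod_one_sub_exp_le_expMeasure_pi_real one_pos (fun i => (hlam i).le)
      (fun i => mul_nonneg (hc i) hγ.le) hbox
    simp only [one_mul] at hlower
    rw [Finset.prod_div_distrib, Finset.prod_const, Finset.card_univ, Fintype.card_fin]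
    exact div_le_div_of_nonneg_right hlower (by positivity)
  · filter_upwards [self_mem_nhdsWithin] with γ (hγ : 0 < γ)
    have hupper := expMeasure_pi_real_le_prod one_pos hlam hγ.le
    simp only [one_mul, Finset.prod_div_distrib, Finset.prod_const, Finset.card_univ,
      Fintype.card_fin] at hupper
    rw [div_le_iff₀ (by positivity), one_div_mul_eq_div]
    exact hupper

/-- Asymptotic lower bound on the left-tail probability (complex
central case): for i.i.d. rate-1 exponentials `W₁,…,W_N`,
`liminf_{γ₀→0⁺} P(∑ λᵢ Wᵢ ≤ γ₀)/γ₀^N ≥ 1/(N^N ∏ᵢ λᵢ)`. -/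
theorem left_tail_liminf_lower_bound_exponential
    (N : ℕ) (hN : 0 < N) (lam : Fin N → ℝ) (hlam : ∀ i, 0 < lam i) :
    Filter.liminf
      (fun γ₀ : ℝ =>
        ((Measure.pi fun _ : Fin N => expMeasure 1)
            {w : Fin N → ℝ | ∑ i, lam i * w i ≤ γ₀}).toReal / γ₀ ^ N)
      (nhdsWithin 0 (Set.Ioi 0))
      ≥ 1 / ((N : ℝ) ^ N * ∏ i, lam i) :=
  left_tail_liminf_lower_bound_exponential_general N lam hlam
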